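/- (Daboussi–Kátai / Bourgain–Sarnak–Ziegler criterion) Let f : ℕ → ℂ be bounded. If for all pairs of distinct primes p, q one has Σ_{n ≤ x} f(pn)·conj(f(qn)) = o(x) as x → ∞, then Σ_{n ≤ x} μ(n)·f(n) = o(x). -/

import Mathlib

open Finset Filter ArithmeticFunction

noncomputable def dkS (f : ℕ → ℂ) (x : ℕ) : ℂ :=
  ∑ n ∈ Finset.Icc 1 x, (moebius n : ℂ) * f n

noncomputable def dkK (P : Finset ℕ) : ℝ := ∑ p ∈ P, (1 : ℝ) / p

noncomputable def dkW (P : Finset ℕ) (n : ℕ) : ℝ :=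
  ∑ p ∈ P, if p ∣ n then (1 : ℝ) else 0

noncomputable def dkG (f : ℕ → ℂ) (P : Finset ℕ) (x m : ℕ) : ℂ :=
  ∑ p ∈ P, if p * m ≤ x then f (p * m) else 0

noncomputable def dkOff (f : ℕ → ℂ) (P : Finset ℕ) (x : ℕ) : ℝ :=
  ∑ p ∈ P, ∑ q ∈ P.erase p,
    ‖(∑ m ∈ Finset.Icc 1 (x / max p q), f (p * m) * star (f (q * m)))‖

lemma dk_moebius_abs (n : ℕ) : ‖((moebius n : ℤ) : ℂ)‖ ≤ 1 := by
  by_cases h : Squarefree n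
  · rw [moebius_apply_of_squarefree h]
    push_cast
    rw [norm_pow, norm_neg, norm_one, one_pow]
  · rw [moebius_eq_zero_of_not_squarefree h]
    simp

lemma dk_Icc_eq_Ioc (x : ℕ) : Finset.Icc 1 x = Finset.Ioc 0 x := by
  ext n; simp [Nat.succ_le_iff]

lemma dk_card_mult (p x : ℕ) : ((Finset.Icc 1 x).filter (fun n => p ∣ n)).card = x / p := by
  rw [dk_Icc_eq_Ioc, Nat.Ioc_filter_dvd_card_eq_div]

lemma dk_reindex (p x : ℕ) (hp : 0 < p) (g : ℕ → ℂ) :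
    ∑ n ∈ (Finset.Icc 1 x).filter (fun n => p ∣ n), g n
      = ∑ m ∈ Finset.Icc 1 (x / p), g (p * m) := by
  refine Finset.sum_nbij' (fun n => n / p) (fun m => p * m) ?_ ?_ ?_ ?_ ?_
  · intro n hn
    simp only [mem_filter, mem_Icc] at hn ⊢
    obtain ⟨⟨h1, h2⟩, h3⟩ := hn
    constructor
    · rw [Nat.one_le_div_iff hp]
      exact Nat.le_of_dvd (by omega) h3
    · exact Nat.div_le_div_right h2
  · intro m hm
    simp only [mem_filter, mem_Icc] at hm ⊢
    refine ⟨⟨by nlinarith [hm.1], ?_⟩, Dvd.intro m rfl⟩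
    rw [Nat.le_div_iff_mul_le hp] at hm
    rw [mul_comm]; omega
  · intro n hn
    simp only [mem_filter] at hn
    exact Nat.mul_div_cancel' hn.2
  · intro m hm
    exact Nat.mul_div_cancel_left m hp
  · intro n hn
    simp only [mem_filter] at hn
    rw [Nat.mul_div_cancel' hn.2]

lemma dk_moebius_pm_dvd (p m : ℕ) (hp : p.Prime) (hd : p ∣ m) : moebius (p * m) = 0 := by
  rcases Nat.eq_zero_or_pos m with rfl | hm
  · simp
  refine moebius_eq_zero_of_not_squarefree fun hsq => ?_
  have : p * p ∣ p * m := mul_dvd_mul_left p hd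
  exact hp.one_lt.ne' (Nat.isUnit_iff.mp (hsq p this))

lemma dk_moebius_pm (p m : ℕ) (hp : p.Prime) (hd : ¬ p ∣ m) :
    moebius (p * m) = - moebius m := by
  rw [isMultiplicative_moebius.map_mul_of_coprime (hp.coprime_iff_not_dvd.mpr hd),
    moebius_apply_prime hp]
  ring

lemma dk_telescope (N : ℕ) (hN : 1 ≤ N) :
    ∑ n ∈ Finset.Icc 2 N, (1 : ℝ) / (((n : ℝ) - 1) * n) = 1 - 1 / N := by
  induction N with
  | zero => omega
  | succ N ih =>
    rcases Nat.lt_or_ge N 1 with h | h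
    · interval_cases N
      · simp
    · rw [Finset.sum_Icc_succ_top (by omega), ih h]
      have h1 : (N : ℝ) ≥ 1 := by exact_mod_cast h
      have h2 : (N : ℝ) ≠ 0 := by positivity
      have h3 : ((N : ℝ) + 1) ≠ 0 := by positivity
      push_cast
      field_simp
      ring_nf; rw [mul_inv_cancel₀ h2]; ring

lemma dk_sum_one_div_sq (P : Finset ℕ) (hP : ∀ p ∈ P, 2 ≤ p) :
    ∑ p ∈ P, (1 : ℝ) / (p : ℝ) ^ 2 ≤ 1 := by
  rcases P.eq_empty_or_nonempty with rfl | hne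
  · simp
  set N := P.sup _root_.id with hNdef
  have hN1 : 1 ≤ N := by
    obtain ⟨p, hp⟩ := hne
    exact le_trans (by omega) ((hP p hp).trans (Finset.le_sup (f := _root_.id) hp))
  have hsub : P ⊆ Finset.Icc 2 N := by
    intro p hp
    exact Finset.mem_Icc.mpr ⟨hP p hp, Finset.le_sup (f := _root_.id) hp⟩
  calc ∑ p ∈ P, (1 : ℝ) / (p : ℝ) ^ 2
      ≤ ∑ p ∈ Finset.Icc 2 N, (1 : ℝ) / (p : ℝ) ^ 2 := by
        refine Finset.sum_le_sum_of_subset_of_nonneg hsub ?_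
        intro p hp _
        have : (2 : ℝ) ≤ p := by
          exact_mod_cast (Finset.mem_Icc.mp hp).1
        positivity
    _ ≤ ∑ p ∈ Finset.Icc 2 N, (1 : ℝ) / (((p : ℝ) - 1) * p) := by
        refine Finset.sum_le_sum fun p hp => ?_
        have h2 : (2 : ℝ) ≤ p := by exact_mod_cast (Finset.mem_Icc.mp hp).1
        rw [div_le_div_iff₀ (by positivity) (by nlinarith)]
        nlinarith
    _ = 1 - 1 / N := dk_telescope N hN1
    _ ≤ 1 := by
        have : (0:ℝ) ≤ 1 / N := by positivity
        linarith

lemma dk_sum_boole (p x : ℕ) :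
    ∑ n ∈ Finset.Icc 1 x, (if p ∣ n then (1 : ℝ) else 0) = ((x / p : ℕ) : ℝ) := by
  rw [Finset.sum_boole, dk_card_mult]

lemma dk_W_sum (P : Finset ℕ) (x : ℕ) :
    ∑ n ∈ Finset.Icc 1 x, dkW P n = ∑ p ∈ P, ((x / p : ℕ) : ℝ) := by
  unfold dkW
  rw [Finset.sum_comm]
  exact Finset.sum_congr rfl fun p _ => dk_sum_boole p x

lemma dk_W2_sum (P : Finset ℕ) (hP : ∀ p ∈ P, p.Prime) (x : ℕ) :
    ∑ n ∈ Finset.Icc 1 x, (dkW P n) ^ 2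
      = (∑ p ∈ P, ((x / p : ℕ) : ℝ))
        + ∑ p ∈ P, ∑ q ∈ P.erase p, ((x / (p * q) : ℕ) : ℝ) := by
  have key : ∀ n, (dkW P n) ^ 2
      = ∑ p ∈ P, ∑ q ∈ P, (if p ∣ n ∧ q ∣ n then (1:ℝ) else 0) := by
    intro n
    rw [sq, dkW, Finset.sum_mul_sum]
    refine Finset.sum_congr rfl fun p _ => Finset.sum_congr rfl fun q _ => ?_
    by_cases h1 : p ∣ n <;> by_cases h2 : q ∣ n <;> simp [h1, h2]
  calc ∑ n ∈ Finset.Icc 1 x, (dkW P n) ^ 2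
      = ∑ p ∈ P, ∑ q ∈ P, ∑ n ∈ Finset.Icc 1 x, (if p ∣ n ∧ q ∣ n then (1:ℝ) else 0) := by
        rw [Finset.sum_congr rfl fun n _ => key n]
        rw [Finset.sum_comm]
        refine Finset.sum_congr rfl fun p _ => Finset.sum_comm
    _ = ∑ p ∈ P, (((x / p : ℕ) : ℝ)
          + ∑ q ∈ P.erase p, ((x / (p * q) : ℕ) : ℝ)) := by
        refine Finset.sum_congr rfl fun p hp => ?_
        rw [← Finset.add_sum_erase _ _ hp]
        congr 1
        · rw [← dk_sum_boole p x]
          exact Finset.sum_congr rfl fun n _ => by simp [and_self]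
        · refine Finset.sum_congr rfl fun q hq => ?_
          have hco : Nat.Coprime p q :=
            ((hP p hp).coprime_iff_not_dvd).mpr fun hd => (Finset.mem_erase.mp hq).1
              (((Nat.prime_dvd_prime_iff_eq (hP p hp) (hP q (Finset.mem_erase.mp hq).2)).mp hd).symm)
          have hiff : ∀ n, (p ∣ n ∧ q ∣ n) ↔ (p * q ∣ n) := fun n =>
            ⟨fun h => hco.mul_dvd_of_dvd_of_dvd h.1 h.2,
             fun h => ⟨(dvd_mul_right p q).trans h, (dvd_mul_left q p).trans h⟩⟩
          rw [← dk_sum_boole (p*q) x]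
          exact Finset.sum_congr rfl fun n _ => by rw [if_congr (hiff n) rfl rfl]
    _ = _ := by rw [Finset.sum_add_distrib]

lemma dk_cast_div_ge (p x : ℕ) (hp : 0 < p) : (x : ℝ) / p - 1 ≤ ((x / p : ℕ) : ℝ) := by
  have hx : x < p * (x / p) + p := by
    have h1 := Nat.div_add_mod x p
    have h2 := Nat.mod_lt x hp
    omega
  have hp' : (0:ℝ) < p := by exact_mod_cast hp
  rw [div_sub_one hp'.ne', div_le_iff₀ hp']
  have : (x : ℝ) < p * ((x / p : ℕ) : ℝ) + p := by exact_mod_cast hx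
  nlinarith

lemma dk_TK (P : Finset ℕ) (hP : ∀ p ∈ P, p.Prime) (x : ℕ) :
    ∑ n ∈ Finset.Icc 1 x, (dkW P n - dkK P) ^ 2
      ≤ dkK P * x + 2 * dkK P * P.card := by
  set K := dkK P with hK
  have hK0 : 0 ≤ K := Finset.sum_nonneg fun p _ => by positivity
  set A := ∑ p ∈ P, ((x / p : ℕ) : ℝ) with hA
  set B := ∑ p ∈ P, ∑ q ∈ P.erase p, ((x / (p * q) : ℕ) : ℝ) with hB
  have expand : ∑ n ∈ Finset.Icc 1 x, (dkW P n - K) ^ 2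
      = (∑ n ∈ Finset.Icc 1 x, (dkW P n)^2) - 2*K*(∑ n ∈ Finset.Icc 1 x, dkW P n)
        + x * K^2 := by
    have : ∀ n ∈ Finset.Icc 1 x, (dkW P n - K)^2
        = (dkW P n)^2 - 2*K*(dkW P n) + K^2 := fun n _ => by ring
    rw [Finset.sum_congr rfl this, Finset.sum_add_distrib, Finset.sum_sub_distrib,
      ← Finset.mul_sum, Finset.sum_const, Nat.card_Icc]
    simp [mul_comm]
  have hA1 : A ≤ K * x := by
    rw [hA, hK, dkK, Finset.sum_mul]
    refine Finset.sum_le_sum fun p _ => ?_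
    calc ((x / p : ℕ) : ℝ) ≤ (x : ℝ) / p := Nat.cast_div_le
      _ = 1 / (p:ℝ) * x := by ring
  have hA2 : K * x - P.card ≤ A := by
    have heq : K * x - P.card = ∑ p ∈ P, (1 / (p:ℝ) * x - 1) := by
      rw [Finset.sum_sub_distrib, Finset.sum_const, ← Finset.sum_mul, hK, dkK]
      simp
    rw [heq, hA]
    refine Finset.sum_le_sum fun p hp => ?_
    have := dk_cast_div_ge p x (hP p hp).pos
    have hrw : (1 : ℝ) / p * x = (x:ℝ) / p := by ring
    linarith [this, hrw.le, hrw.ge]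
  have hB1 : B ≤ K * K * x := by
    have step1 : B ≤ ∑ p ∈ P, ∑ q ∈ P, ((x : ℝ) / (p * q)) := by
      rw [hB]
      refine Finset.sum_le_sum fun p hp => ?_
      refine le_trans (Finset.sum_le_sum fun q hq => ?_)
        (Finset.sum_le_sum_of_subset_of_nonneg (Finset.erase_subset p P)
          fun q _ _ => by positivity)
      calc ((x / (p*q) : ℕ) : ℝ) ≤ (x : ℝ) / ((p*q : ℕ) : ℝ) := Nat.cast_div_le
        _ = (x : ℝ) / ((p:ℝ) * q) := by push_cast; ring
    refine step1.trans ?_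
    rw [hK, dkK]
    have hinner : ∀ p ∈ P, ∑ q ∈ P, ((x:ℝ)/(p*q)) = (1/(p:ℝ)) * ((x:ℝ) * ∑ q ∈ P, (1/q : ℝ)) := by
      intro p _
      rw [Finset.mul_sum, Finset.mul_sum]
      refine Finset.sum_congr rfl fun q _ => ?_
      rw [one_div, one_div, div_eq_mul_inv, mul_inv]
      ring
    calc ∑ p ∈ P, ∑ q ∈ P, ((x:ℝ)/(p*q))
        = ∑ p ∈ P, ((1/(p:ℝ)) * ((x:ℝ) * ∑ q ∈ P, (1/q:ℝ))) := by exact Finset.sum_congr rfl hinner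
      _ = (∑ p ∈ P, (1/(p:ℝ))) * ((x:ℝ) * ∑ q ∈ P, (1/q:ℝ)) := by rw [Finset.sum_mul]
      _ = (∑ p ∈ P, (1/(p:ℝ))) * (∑ q ∈ P, (1/q:ℝ)) * x := by ring
      _ ≤ ((∑ p ∈ P, (1/(p:ℝ))) * ∑ p ∈ P, (1/(p:ℝ))) * x := le_of_eq (by ring)
  rw [expand, dk_W_sum, dk_W2_sum P hP, ← hA, ← hB]
  nlinarith [mul_le_mul_of_nonneg_left hA2 (by linarith : (0:ℝ) ≤ 2*K)]

lemma dk_sub_sum (f : ℕ → ℂ) (p x : ℕ) (hp : 0 < p) :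
    ∑ m ∈ Finset.Icc 1 (x / p), (moebius m : ℂ) * f (p * m)
      = ∑ m ∈ Finset.Icc 1 x, (moebius m : ℂ) * (if p * m ≤ x then f (p * m) else 0) := by
  have h1 : ∑ m ∈ Finset.Icc 1 x, (moebius m : ℂ) * (if p * m ≤ x then f (p * m) else 0)
      = ∑ m ∈ Finset.Icc 1 (x / p), (moebius m : ℂ) * (if p * m ≤ x then f (p * m) else 0) :=
    (Finset.sum_subset (Finset.Icc_subset_Icc_right (Nat.div_le_self x p)) (fun m hm hm' => by
      rw [Finset.mem_Icc] at hm hm'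
      have hn : ¬ p * m ≤ x := by
        intro hc
        exact hm' ⟨hm.1, (Nat.le_div_iff_mul_le hp).mpr (by rw [mul_comm]; exact hc)⟩
      rw [if_neg hn, mul_zero])).symm
  rw [h1]
  refine Finset.sum_congr rfl fun m hm => ?_
  rw [Finset.mem_Icc] at hm
  have hle : p * m ≤ x := by
    have := (Nat.le_div_iff_mul_le hp).mp hm.2
    rw [mul_comm]
    exact this
  rw [if_pos hle]

lemma dk_identity (f : ℕ → ℂ) (P : Finset ℕ) (hP : ∀ p ∈ P, p.Prime) (x : ℕ) :
    ∑ n ∈ Finset.Icc 1 x, (moebius n : ℂ) * f n * ((dkW P n : ℝ) : ℂ)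
      = -(∑ m ∈ Finset.Icc 1 x, (moebius m : ℂ) * dkG f P x m)
        + ∑ p ∈ P, ∑ m ∈ (Finset.Icc 1 (x / p)).filter (fun m => p ∣ m),
            (moebius m : ℂ) * f (p * m) := by
  have hW : ∀ n, ((dkW P n : ℝ) : ℂ) = ∑ p ∈ P, (if p ∣ n then (1:ℂ) else 0) := by
    intro n
    unfold dkW
    push_cast
    exact Finset.sum_congr rfl fun p _ => by split <;> simp
  calc ∑ n ∈ Finset.Icc 1 x, (moebius n : ℂ) * f n * ((dkW P n : ℝ) : ℂ)
      = ∑ n ∈ Finset.Icc 1 x, ∑ p ∈ P,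
          (if p ∣ n then (moebius n : ℂ) * f n else 0) := by
        refine Finset.sum_congr rfl fun n _ => ?_
        rw [hW, Finset.mul_sum]
        exact Finset.sum_congr rfl fun p _ => by split <;> simp
    _ = ∑ p ∈ P, ∑ n ∈ (Finset.Icc 1 x).filter (fun n => p ∣ n),
          (moebius n : ℂ) * f n := by
        rw [Finset.sum_comm]
        exact Finset.sum_congr rfl fun p _ => (Finset.sum_filter _ _).symm
    _ = ∑ p ∈ P, ∑ m ∈ Finset.Icc 1 (x / p), (moebius (p * m) : ℂ) * f (p * m) := by
        exact Finset.sum_congr rfl fun p hp =>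
          dk_reindex p x (hP p hp).pos (fun n => (moebius n : ℂ) * f n)
    _ = ∑ p ∈ P, ((∑ m ∈ (Finset.Icc 1 (x / p)).filter (fun m => p ∣ m),
            (moebius m : ℂ) * f (p * m))
          - ∑ m ∈ Finset.Icc 1 (x / p), (moebius m : ℂ) * f (p * m)) := by
        refine Finset.sum_congr rfl fun p hp => ?_
        rw [Finset.sum_filter, ← Finset.sum_sub_distrib]
        refine Finset.sum_congr rfl fun m _ => ?_
        by_cases hd : p ∣ m
        · rw [if_pos hd, dk_moebius_pm_dvd p m (hP p hp) hd]
          push_cast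
          ring
        · rw [if_neg hd, dk_moebius_pm p m (hP p hp) hd]
          push_cast
          ring
    _ = _ := by
        rw [Finset.sum_sub_distrib]
        have : ∑ p ∈ P, ∑ m ∈ Finset.Icc 1 (x / p), (moebius m : ℂ) * f (p * m)
            = ∑ m ∈ Finset.Icc 1 x, (moebius m : ℂ) * dkG f P x m := by
          rw [Finset.sum_congr rfl fun p hp => dk_sub_sum f p x (hP p hp).pos,
            Finset.sum_comm]
          refine Finset.sum_congr rfl fun m _ => ?_
          rw [dkG, Finset.mul_sum]
        rw [this]
        ring

lemma dk_inner (f : ℕ → ℂ) (p q x : ℕ) (hp : 0 < p) (hq : 0 < q) :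
    ∑ m ∈ Finset.Icc 1 x,
        (if p * m ≤ x then f (p * m) else 0) * star (if q * m ≤ x then f (q * m) else 0)
      = ∑ m ∈ Finset.Icc 1 (x / max p q), f (p * m) * star (f (q * m)) := by
  have hmax : 0 < max p q := lt_max_of_lt_left hp
  rw [← Finset.sum_subset (Finset.Icc_subset_Icc_right (Nat.div_le_self x (max p q)))
    (fun m hm hm' => ?_)]
  · refine Finset.sum_congr rfl fun m hm => ?_
    rw [Finset.mem_Icc, Nat.le_div_iff_mul_le hmax] at hm
    have h1 : p * m ≤ x := le_trans (by exact Nat.mul_le_mul_right m (le_max_left p q))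
      (by rw [mul_comm] at hm; exact hm.2)
    have h2 : q * m ≤ x := le_trans (by exact Nat.mul_le_mul_right m (le_max_right p q))
      (by rw [mul_comm] at hm; exact hm.2)
    rw [if_pos h1, if_pos h2]
  · rw [Finset.mem_Icc] at hm hm'
    rw [Nat.le_div_iff_mul_le hmax] at hm'
    have : ¬ m * max p q ≤ x := fun hc => hm' ⟨hm.1, hc⟩
    rcases max_choice p q with h | h
    · rw [if_neg (by rw [h, mul_comm] at this; exact this : ¬ p * m ≤ x), zero_mul]
    · rw [if_neg (by rw [h, mul_comm] at this; exact this : ¬ q * m ≤ x)]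
      simp

lemma dk_sq (f : ℕ → ℂ) (C : ℝ) (hbd : ∀ n, ‖(f n)‖ ≤ C)
    (P : Finset ℕ) (hP : ∀ p ∈ P, p.Prime) (x : ℕ) :
    ∑ m ∈ Finset.Icc 1 x, ‖(dkG f P x m)‖ ^ 2
      ≤ C ^ 2 * dkK P * x + dkOff f P x := by
  have hC : 0 ≤ C := le_trans (norm_nonneg (f 0)) (hbd 0)
  set S' : ℕ → ℕ → ℂ := fun p q =>
    ∑ m ∈ Finset.Icc 1 (x / max p q), f (p * m) * star (f (q * m)) with hS'
  have expand : ∑ m ∈ Finset.Icc 1 x, ‖(dkG f P x m)‖ ^ 2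
      = ∑ p ∈ P, ∑ q ∈ P, (S' p q).re := by
    have h1 : ∀ m, (‖(dkG f P x m)‖ ^ 2 : ℝ)
        = (dkG f P x m * star (dkG f P x m)).re := by
      intro m
      rw [Complex.sq_norm, Complex.star_def, Complex.mul_conj]
      simp
    have h2 : ∀ m, dkG f P x m * star (dkG f P x m)
        = ∑ p ∈ P, ∑ q ∈ P,
            (if p * m ≤ x then f (p * m) else 0) * star (if q * m ≤ x then f (q * m) else 0) := by
      intro m
      rw [dkG, star_sum, Finset.sum_mul_sum]
    calc ∑ m ∈ Finset.Icc 1 x, ‖(dkG f P x m)‖ ^ 2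
        = ∑ m ∈ Finset.Icc 1 x, (∑ p ∈ P, ∑ q ∈ P,
            (if p * m ≤ x then f (p * m) else 0) * star (if q * m ≤ x then f (q * m) else 0)).re := by
          refine Finset.sum_congr rfl fun m _ => ?_
          rw [h1, h2]
      _ = ∑ m ∈ Finset.Icc 1 x, ∑ p ∈ P, ∑ q ∈ P,
            ((if p * m ≤ x then f (p * m) else 0) * star (if q * m ≤ x then f (q * m) else 0)).re := by
          refine Finset.sum_congr rfl fun m _ => ?_
          rw [Complex.re_sum]
          exact Finset.sum_congr rfl fun p _ => Complex.re_sum _ _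
      _ = ∑ p ∈ P, ∑ q ∈ P, ∑ m ∈ Finset.Icc 1 x,
            ((if p * m ≤ x then f (p * m) else 0) * star (if q * m ≤ x then f (q * m) else 0)).re := by
          rw [Finset.sum_comm]
          exact Finset.sum_congr rfl fun p _ => Finset.sum_comm
      _ = ∑ p ∈ P, ∑ q ∈ P, (S' p q).re := by
          refine Finset.sum_congr rfl fun p hp => Finset.sum_congr rfl fun q hq => ?_
          rw [← Complex.re_sum, dk_inner f p q x (hP p hp).pos (hP q hq).pos]
  rw [expand]
  have split : ∀ p ∈ P, ∑ q ∈ P, (S' p q).re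
      = (S' p p).re + ∑ q ∈ P.erase p, (S' p q).re :=
    fun p hp => (Finset.add_sum_erase P _ hp).symm
  rw [Finset.sum_congr rfl split, Finset.sum_add_distrib]
  have diag : ∀ p ∈ P, (S' p p).re ≤ C ^ 2 * ((x : ℝ) / p) := by
    intro p hp
    have : (S' p p).re = ∑ m ∈ Finset.Icc 1 (x / p), ‖(f (p * m))‖ ^ 2 := by
      rw [hS']
      simp only [max_self]
      rw [Complex.re_sum]
      refine Finset.sum_congr rfl fun m _ => ?_
      rw [Complex.star_def, Complex.mul_conj, Complex.sq_norm]
      simp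
    rw [this]
    calc ∑ m ∈ Finset.Icc 1 (x / p), ‖(f (p * m))‖ ^ 2
        ≤ ∑ m ∈ Finset.Icc 1 (x / p), C ^ 2 := by
          refine Finset.sum_le_sum fun m _ => ?_
          exact pow_le_pow_left₀ (norm_nonneg _) (hbd _) 2
      _ = ((x / p : ℕ) : ℝ) * C ^ 2 := by
          rw [Finset.sum_const, Nat.card_Icc]
          simp [Nat.add_sub_cancel]
      _ ≤ ((x : ℝ) / p) * C ^ 2 := by
          have := Nat.cast_div_le (α := ℝ) (m := x) (n := p)
          nlinarith [sq_nonneg C, this]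
      _ = C ^ 2 * ((x : ℝ) / p) := by ring
  have offd : ∀ p ∈ P, ∑ q ∈ P.erase p, (S' p q).re
      ≤ ∑ q ∈ P.erase p, ‖(S' p q)‖ :=
    fun p _ => Finset.sum_le_sum fun q _ => Complex.re_le_norm _
  have hsum1 : ∑ p ∈ P, C ^ 2 * ((x : ℝ) / p) = C ^ 2 * dkK P * x := by
    rw [dkK, Finset.mul_sum, Finset.sum_mul]
    exact Finset.sum_congr rfl fun p _ => by ring
  calc (∑ p ∈ P, (S' p p).re) + ∑ p ∈ P, ∑ q ∈ P.erase p, (S' p q).re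
      ≤ (∑ p ∈ P, C ^ 2 * ((x : ℝ) / p)) + ∑ p ∈ P, ∑ q ∈ P.erase p, ‖(S' p q)‖ :=
        add_le_add (Finset.sum_le_sum diag) (Finset.sum_le_sum offd)
    _ = C ^ 2 * dkK P * x + dkOff f P x := by rw [hsum1, dkOff]

lemma dk_E (f : ℕ → ℂ) (C : ℝ) (hbd : ∀ n, ‖(f n)‖ ≤ C)
    (P : Finset ℕ) (hP : ∀ p ∈ P, p.Prime) (x : ℕ) :
    ‖(∑ p ∈ P, ∑ m ∈ (Finset.Icc 1 (x / p)).filter (fun m => p ∣ m),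
        (moebius m : ℂ) * f (p * m))‖ ≤ C * x := by
  have hC : 0 ≤ C := le_trans (norm_nonneg (f 0)) (hbd 0)
  calc ‖(∑ p ∈ P, ∑ m ∈ (Finset.Icc 1 (x / p)).filter (fun m => p ∣ m),
        (moebius m : ℂ) * f (p * m))‖
      ≤ ∑ p ∈ P, ‖(∑ m ∈ (Finset.Icc 1 (x / p)).filter (fun m => p ∣ m),
          (moebius m : ℂ) * f (p * m))‖ := norm_sum_le _ _
    _ ≤ ∑ p ∈ P, ∑ m ∈ (Finset.Icc 1 (x / p)).filter (fun m => p ∣ m),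
          ‖((moebius m : ℂ) * f (p * m))‖ :=
        Finset.sum_le_sum fun p _ => norm_sum_le _ _
    _ ≤ ∑ p ∈ P, ∑ m ∈ (Finset.Icc 1 (x / p)).filter (fun m => p ∣ m), C := by
        refine Finset.sum_le_sum fun p _ => Finset.sum_le_sum fun m _ => ?_
        rw [norm_mul]
        calc ‖((moebius m : ℂ))‖ * ‖(f (p * m))‖
            ≤ 1 * C := mul_le_mul (dk_moebius_abs m) (hbd _) (norm_nonneg _) zero_le_one
          _ = C := one_mul C
    _ = ∑ p ∈ P, C * ((x / (p * p) : ℕ) : ℝ) := by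
        refine Finset.sum_congr rfl fun p _ => ?_
        rw [Finset.sum_const, dk_card_mult, Nat.div_div_eq_div_mul]
        simp [mul_comm]
    _ ≤ ∑ p ∈ P, C * ((x : ℝ) * (1 / (p : ℝ) ^ 2)) := by
        refine Finset.sum_le_sum fun p _ => ?_
        refine mul_le_mul_of_nonneg_left ?_ hC
        calc ((x / (p * p) : ℕ) : ℝ) ≤ (x : ℝ) / ((p * p : ℕ) : ℝ) := Nat.cast_div_le
          _ = (x : ℝ) * (1 / (p : ℝ) ^ 2) := by push_cast; ring
    _ = C * (x : ℝ) * ∑ p ∈ P, (1 / (p : ℝ) ^ 2) := by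
        rw [Finset.mul_sum]
        exact Finset.sum_congr rfl fun p _ => by ring
    _ ≤ C * (x : ℝ) * 1 := by
        refine mul_le_mul_of_nonneg_left (dk_sum_one_div_sq P fun p hp => (hP p hp).two_le) ?_
        positivity
    _ = C * x := by ring

lemma dk_CS (x : ℕ) (a : ℕ → ℝ) :
    ∑ m ∈ Finset.Icc 1 x, |a m|
      ≤ Real.sqrt x * Real.sqrt (∑ m ∈ Finset.Icc 1 x, (a m) ^ 2) := by
  have h := Real.sum_mul_le_sqrt_mul_sqrt (Finset.Icc 1 x) (fun _ => (1:ℝ)) (fun m => |a m|)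
  simp only [one_mul, one_pow, Finset.sum_const, Nat.card_Icc, Nat.add_sub_cancel,
    nsmul_eq_mul, mul_one, sq_abs] at h
  exact h

lemma dk_off_nonneg (f : ℕ → ℂ) (P : Finset ℕ) (x : ℕ) : 0 ≤ dkOff f P x :=
  Finset.sum_nonneg fun p _ => Finset.sum_nonneg fun q _ => norm_nonneg _

lemma dk_K_nonneg (P : Finset ℕ) : 0 ≤ dkK P :=
  Finset.sum_nonneg fun p _ => by positivity

lemma dk_main (f : ℕ → ℂ) (C : ℝ) (hbd : ∀ n, ‖(f n)‖ ≤ C)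
    (P : Finset ℕ) (hP : ∀ p ∈ P, p.Prime) (x : ℕ) :
    dkK P * ‖(dkS f x)‖
      ≤ C * (Real.sqrt x * Real.sqrt (dkK P * x + 2 * dkK P * P.card))
        + Real.sqrt x * Real.sqrt (C ^ 2 * dkK P * x + dkOff f P x)
        + C * x := by
  have hC : 0 ≤ C := le_trans (norm_nonneg (f 0)) (hbd 0)
  set K := dkK P with hKdef
  have hK0 : 0 ≤ K := dk_K_nonneg P
  have e1 : (K : ℂ) * dkS f x
      = (∑ n ∈ Finset.Icc 1 x, (moebius n : ℂ) * f n * ((K : ℝ) - (dkW P n) : ℝ))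
        + ∑ n ∈ Finset.Icc 1 x, (moebius n : ℂ) * f n * ((dkW P n : ℝ) : ℂ) := by
    rw [dkS, Finset.mul_sum, ← Finset.sum_add_distrib]
    refine Finset.sum_congr rfl fun n _ => ?_
    push_cast
    ring
  have habs : K * ‖(dkS f x)‖ = ‖((K:ℂ) * dkS f x)‖ := by
    rw [norm_mul, Complex.norm_real, Real.norm_eq_abs, abs_of_nonneg hK0]
  rw [habs, e1]
  have A1 : ‖(∑ n ∈ Finset.Icc 1 x,
        (moebius n : ℂ) * f n * (((K : ℝ) - (dkW P n) : ℝ) : ℂ))‖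
      ≤ C * (Real.sqrt x * Real.sqrt (K * x + 2 * K * P.card)) := by
    calc ‖(∑ n ∈ Finset.Icc 1 x,
          (moebius n : ℂ) * f n * (((K : ℝ) - (dkW P n) : ℝ) : ℂ))‖
        ≤ ∑ n ∈ Finset.Icc 1 x,
            ‖((moebius n : ℂ) * f n * (((K : ℝ) - (dkW P n) : ℝ) : ℂ))‖ :=
          norm_sum_le _ _
      _ ≤ ∑ n ∈ Finset.Icc 1 x, C * |dkW P n - K| := by
          refine Finset.sum_le_sum fun n _ => ?_
          rw [norm_mul, norm_mul, Complex.norm_real, Real.norm_eq_abs, abs_sub_comm]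
          calc ‖((moebius n : ℂ))‖ * ‖(f n)‖ * |dkW P n - K|
              ≤ 1 * C * |dkW P n - K| := by
                refine mul_le_mul_of_nonneg_right ?_ (abs_nonneg _)
                exact mul_le_mul (dk_moebius_abs n) (hbd n) (norm_nonneg _) zero_le_one
            _ = C * |dkW P n - K| := by ring
      _ = C * ∑ n ∈ Finset.Icc 1 x, |dkW P n - K| := by rw [Finset.mul_sum]
      _ ≤ C * (Real.sqrt x * Real.sqrt (∑ n ∈ Finset.Icc 1 x, (dkW P n - K) ^ 2)) :=
          mul_le_mul_of_nonneg_left (dk_CS x _) hC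
      _ ≤ C * (Real.sqrt x * Real.sqrt (K * x + 2 * K * P.card)) := by
          refine mul_le_mul_of_nonneg_left ?_ hC
          exact mul_le_mul_of_nonneg_left (Real.sqrt_le_sqrt (dk_TK P hP x)) (Real.sqrt_nonneg _)
  have A2 : ‖(∑ n ∈ Finset.Icc 1 x, (moebius n : ℂ) * f n * ((dkW P n : ℝ) : ℂ))‖
      ≤ Real.sqrt x * Real.sqrt (C ^ 2 * K * x + dkOff f P x) + C * x := by
    rw [dk_identity f P hP x]
    calc ‖(-(∑ m ∈ Finset.Icc 1 x, (moebius m : ℂ) * dkG f P x m)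
          + ∑ p ∈ P, ∑ m ∈ (Finset.Icc 1 (x / p)).filter (fun m => p ∣ m),
              (moebius m : ℂ) * f (p * m))‖
        ≤ ‖(∑ m ∈ Finset.Icc 1 x, (moebius m : ℂ) * dkG f P x m)‖
          + ‖(∑ p ∈ P, ∑ m ∈ (Finset.Icc 1 (x / p)).filter (fun m => p ∣ m),
              (moebius m : ℂ) * f (p * m))‖ := by
          refine le_trans (norm_add_le _ _) ?_
          rw [norm_neg]
      _ ≤ Real.sqrt x * Real.sqrt (C ^ 2 * K * x + dkOff f P x) + C * x := by
          refine add_le_add ?_ (dk_E f C hbd P hP x)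
          calc ‖(∑ m ∈ Finset.Icc 1 x, (moebius m : ℂ) * dkG f P x m)‖
              ≤ ∑ m ∈ Finset.Icc 1 x, ‖((moebius m : ℂ) * dkG f P x m)‖ :=
                norm_sum_le _ _
            _ ≤ ∑ m ∈ Finset.Icc 1 x, |‖(dkG f P x m)‖| := by
                refine Finset.sum_le_sum fun m _ => ?_
                rw [norm_mul, abs_of_nonneg (norm_nonneg _)]
                calc ‖((moebius m : ℂ))‖ * ‖(dkG f P x m)‖
                    ≤ 1 * ‖(dkG f P x m)‖ :=
                      mul_le_mul_of_nonneg_right (dk_moebius_abs m) (norm_nonneg _)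
                  _ = ‖(dkG f P x m)‖ := one_mul _
            _ ≤ Real.sqrt x * Real.sqrt (∑ m ∈ Finset.Icc 1 x, ‖(dkG f P x m)‖ ^ 2) :=
                dk_CS x _
            _ ≤ Real.sqrt x * Real.sqrt (C ^ 2 * K * x + dkOff f P x) :=
                mul_le_mul_of_nonneg_left (Real.sqrt_le_sqrt (dk_sq f C hbd P hP x))
                  (Real.sqrt_nonneg _)
  calc ‖_‖ ≤ _ := norm_add_le _ _
    _ ≤ _ := add_le_add A1 A2
    _ = _ := by ring

lemma dk_exists_P (M : ℝ) : ∃ P : Finset ℕ, (∀ p ∈ P, p.Prime) ∧ M ≤ dkK P := by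
  have hnn : ∀ i, 0 ≤ Set.indicator {p : ℕ | p.Prime} (fun n : ℕ => (1 : ℝ) / n) i :=
    fun i => Set.indicator_nonneg (fun j _ => by positivity) i
  have h := (not_summable_iff_tendsto_nat_atTop_of_nonneg hnn).mp
    not_summable_one_div_on_primes
  obtain ⟨N, hN⟩ := (h.eventually_ge_atTop M).exists
  refine ⟨(Finset.range N).filter Nat.Prime, fun p hp => (Finset.mem_filter.mp hp).2, ?_⟩
  refine hN.trans (le_of_eq ?_)
  rw [dkK, Finset.sum_filter]
  refine Finset.sum_congr rfl fun i _ => ?_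
  rw [Set.indicator_apply]
  simp only [Set.mem_setOf_eq]

lemma dk_pair (f : ℕ → ℂ) (p q : ℕ) (hp : 0 < p) (hq : 0 < q)
    (h : Tendsto (fun y : ℕ =>
        (∑ n ∈ Finset.Icc 1 y, f (p * n) * star (f (q * n))) / (y : ℂ))
      atTop (nhds 0)) :
    Tendsto (fun x : ℕ =>
        ‖(∑ m ∈ Finset.Icc 1 (x / max p q), f (p * m) * star (f (q * m)))‖ / (x : ℝ))
      atTop (nhds 0) := by
  set T : ℕ → ℂ := fun y => ∑ n ∈ Finset.Icc 1 y, f (p * n) * star (f (q * n)) with hT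
  set r : ℕ := max p q with hr
  have hr0 : 0 < r := lt_max_of_lt_left hp
  have h1 : Tendsto (fun y : ℕ => ‖(T y)‖ / (y : ℝ)) atTop (nhds 0) := by
    have := h.norm
    rw [norm_zero] at this
    refine this.congr fun y => ?_
    rw [norm_div, Complex.norm_natCast]
  have h2 : Tendsto (fun x : ℕ => x / r) atTop atTop := by
    refine tendsto_atTop_atTop.mpr fun b => ⟨b * r, fun x hx => ?_⟩
    exact (Nat.le_div_iff_mul_le hr0).mpr hx
  have h3 := h1.comp h2
  refine squeeze_zero' ?_ ?_ h3
  · exact Eventually.of_forall fun x => by positivity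
  · filter_upwards [eventually_ge_atTop r] with x hx
    simp only [Function.comp_apply]
    rcases Nat.eq_zero_or_pos (x / r) with hz | hz
    · rw [hz]
      simp [hT]
    · refine div_le_div_of_nonneg_left (norm_nonneg _) ?_ ?_
      · exact_mod_cast hz
      · exact_mod_cast Nat.div_le_self x r

lemma dk_off_small (f : ℕ → ℂ) (C : ℝ) (hbd : ∀ n, ‖(f n)‖ ≤ C)
    (hpq : ∀ p q : ℕ, p.Prime → q.Prime → p ≠ q →
      Tendsto (fun x : ℕ =>
        (∑ n ∈ Finset.Icc 1 x, f (p * n) * star (f (q * n))) / (x : ℂ))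
        atTop (nhds 0))
    (P : Finset ℕ) (hP : ∀ p ∈ P, p.Prime) {ε : ℝ} (hε : 0 < ε) :
    ∀ᶠ x : ℕ in atTop, dkOff f P x ≤ ε * x := by
  have htend : Tendsto (fun x : ℕ => dkOff f P x / (x : ℝ)) atTop (nhds 0) := by
    have : ∀ x : ℕ, dkOff f P x / (x : ℝ)
        = ∑ p ∈ P, ∑ q ∈ P.erase p,
            ‖(∑ m ∈ Finset.Icc 1 (x / max p q), f (p * m) * star (f (q * m)))‖
              / (x : ℝ) := by
      intro x
      rw [dkOff, Finset.sum_div]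
      exact Finset.sum_congr rfl fun p _ => Finset.sum_div _ _ _
    rw [funext this]
    have h0 : (0 : ℝ) = ∑ p ∈ P, ∑ q ∈ P.erase p, (0 : ℝ) := by simp
    rw [h0]
    refine tendsto_finset_sum _ fun p hp => tendsto_finset_sum _ fun q hq => ?_
    have hqP : q ∈ P := (Finset.mem_erase.mp hq).2
    have hne : p ≠ q := fun hc => (Finset.mem_erase.mp hq).1 hc.symm
    exact dk_pair f p q (hP p hp).pos (hP q hqP).pos
      (hpq p q (hP p hp) (hP q hqP) hne)
  have hev := htend.eventually (eventually_lt_nhds hε)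
  filter_upwards [hev, eventually_ge_atTop 1] with x hx hx1
  have hx0 : (0 : ℝ) < x := by exact_mod_cast hx1
  rw [div_lt_iff₀ hx0] at hx
  linarith

lemma dk_sqrt_add (a b : ℝ) (ha : 0 ≤ a) (hb : 0 ≤ b) :
    Real.sqrt (a + b) ≤ Real.sqrt a + Real.sqrt b := by
  rw [show a + b = Real.sqrt a ^ 2 + Real.sqrt b ^ 2 by
    rw [Real.sq_sqrt ha, Real.sq_sqrt hb]]
  calc Real.sqrt (Real.sqrt a ^ 2 + Real.sqrt b ^ 2)
      ≤ Real.sqrt ((Real.sqrt a + Real.sqrt b) ^ 2) := by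
        refine Real.sqrt_le_sqrt ?_
        nlinarith [Real.sqrt_nonneg a, Real.sqrt_nonneg b]
    _ = Real.sqrt a + Real.sqrt b := Real.sqrt_sq (by positivity)

lemma dk_sqrt_nat_tendsto : Tendsto (fun x : ℕ => Real.sqrt x) atTop atTop := by
  refine tendsto_atTop_atTop.mpr fun b => ⟨Nat.ceil (b ^ 2), fun x hx => ?_⟩
  have h1 : b ^ 2 ≤ (x : ℝ) := by
    refine le_trans (Nat.le_ceil _) ?_
    exact_mod_cast hx
  calc b ≤ |b| := le_abs_self b
    _ = Real.sqrt (b ^ 2) := (Real.sqrt_sq_eq_abs b).symm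
    _ ≤ Real.sqrt x := Real.sqrt_le_sqrt h1

open Finset Filter ArithmeticFunction in
theorem daboussi_katai (f : ℕ → ℂ) (C : ℝ) (hbd : ∀ n, ‖(f n)‖ ≤ C)
    (hpq : ∀ p q : ℕ, p.Prime → q.Prime → p ≠ q →
      Tendsto (fun x : ℕ =>
        (∑ n ∈ Finset.Icc 1 x, f (p * n) * star (f (q * n))) / (x : ℂ))
        atTop (nhds 0)) :
    Tendsto (fun x : ℕ =>
      (∑ n ∈ Finset.Icc 1 x, (moebius n : ℂ) * f n) / (x : ℂ))
      atTop (nhds 0) := by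
  have hC : 0 ≤ C := le_trans (norm_nonneg (f 0)) (hbd 0)
  rw [NormedAddCommGroup.tendsto_nhds_zero]
  intro ε hε
  obtain ⟨P, hP, hKge⟩ := dk_exists_P (1 + 64 * (C + 1) ^ 2 / ε ^ 2 + 8 * C / ε)
  set K := dkK P with hKdef
  have hK0 : 0 ≤ K := dk_K_nonneg P
  have hc1 : 0 ≤ 64 * (C + 1) ^ 2 / ε ^ 2 := by positivity
  have hc2 : 0 ≤ 8 * C / ε := by positivity
  have hK1 : 1 ≤ K := by linarith
  have hKpos : 0 < K := by linarith
  have h64 : 64 * (C + 1) ^ 2 / ε ^ 2 ≤ K := by linarith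
  have h8 : 8 * C / ε ≤ K := by linarith
  set sK := Real.sqrt K with hsKdef
  have hsK0 : 0 ≤ sK := Real.sqrt_nonneg _
  have hsk : sK * sK = K := Real.mul_self_sqrt hK0
  have hsqK : 8 * (C + 1) / ε ≤ sK := by
    rw [hsKdef, show (8 * (C + 1) / ε) = Real.sqrt ((8 * (C + 1) / ε) ^ 2) from
      (Real.sqrt_sq (by positivity)).symm]
    refine Real.sqrt_le_sqrt ?_
    rw [div_pow]
    calc (8 * (C + 1)) ^ 2 / ε ^ 2 = 64 * (C + 1) ^ 2 / ε ^ 2 := by ring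
      _ ≤ K := h64
  have b1 : 2 * C ≤ ε / 4 * sK := by
    have h := mul_le_mul_of_nonneg_left hsqK (by positivity : (0:ℝ) ≤ ε / 4)
    have e : ε / 4 * (8 * (C + 1) / ε) = 2 * (C + 1) := by field_simp; ring
    rw [e] at h
    linarith
  have b2 : C ≤ ε / 8 * K := by
    have h := mul_le_mul_of_nonneg_left h8 (by positivity : (0:ℝ) ≤ ε / 8)
    have e : ε / 8 * (8 * C / ε) = C := by field_simp
    rw [e] at h
    linarith
  clear_value sK
  have hoff := dk_off_small f C hbd hpq P hP (show (0:ℝ) < (ε / 4) ^ 2 by positivity)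
  clear_value K
  set c₃ := C * Real.sqrt (2 * K * P.card) with hc₃def
  have hc₃0 : 0 ≤ c₃ := by positivity
  have htail : Tendsto (fun x : ℕ => c₃ / Real.sqrt x) atTop (nhds 0) :=
    Tendsto.div_atTop tendsto_const_nhds dk_sqrt_nat_tendsto
  have hevtail := htail.eventually (eventually_lt_nhds
    (show (0:ℝ) < ε / 8 * K by positivity))
  clear_value c₃
  filter_upwards [hoff, hevtail, eventually_ge_atTop 1] with x hoffx htailx hx1
  have hx0 : (0:ℝ) < x := by exact_mod_cast hx1
  show ‖dkS f x / (x : ℂ)‖ < ε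
  rw [norm_div, Complex.norm_natCast, div_lt_iff₀ hx0]
  have hmain := dk_main f C hbd P hP x
  rw [← hKdef] at hmain
  set sx := Real.sqrt (x : ℝ) with hsxdef
  have hsx0 : 0 ≤ sx := Real.sqrt_nonneg _
  have hsxpos : 0 < sx := Real.sqrt_pos.mpr hx0
  have hsx1 : sx * sx = x := Real.mul_self_sqrt (le_of_lt hx0)
  clear_value sx
  -- bound the two sqrt terms
  have t1 : C * (sx * Real.sqrt (K * x + 2 * K * P.card)) ≤ C * sK * x + c₃ * sx := by
    have h := dk_sqrt_add (K * x) (2 * K * P.card) (by positivity) (by positivity)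
    have e : Real.sqrt (K * (x:ℝ)) = sK * sx := by rw [Real.sqrt_mul hK0, ← hsKdef, ← hsxdef]
    calc C * (sx * Real.sqrt (K * x + 2 * K * P.card))
        ≤ C * (sx * (sK * sx + Real.sqrt (2 * K * P.card))) := by
          refine mul_le_mul_of_nonneg_left (mul_le_mul_of_nonneg_left ?_ hsx0) hC
          rw [← e]; exact h
      _ = C * sK * (sx * sx) + (C * Real.sqrt (2 * K * P.card)) * sx := by ring
      _ = C * sK * x + c₃ * sx := by rw [hsx1, hc₃def]
  have t2 : sx * Real.sqrt (C ^ 2 * K * x + dkOff f P x) ≤ C * sK * x + ε / 4 * x := by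
    have h := dk_sqrt_add (C ^ 2 * K * x) (dkOff f P x) (by positivity)
      (dk_off_nonneg f P x)
    have e1 : Real.sqrt (C ^ 2 * K * (x:ℝ)) = C * sK * sx := by
      rw [Real.sqrt_mul (by positivity), Real.sqrt_mul (sq_nonneg C), Real.sqrt_sq hC,
        ← hsKdef, ← hsxdef]
    have e2 : Real.sqrt (dkOff f P x) ≤ ε / 4 * sx := by
      refine (Real.sqrt_le_sqrt hoffx).trans ?_
      rw [Real.sqrt_mul (sq_nonneg _), Real.sqrt_sq (by positivity), ← hsxdef]
    calc sx * Real.sqrt (C ^ 2 * K * x + dkOff f P x)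
        ≤ sx * (C * sK * sx + ε / 4 * sx) := by
          refine mul_le_mul_of_nonneg_left (h.trans ?_) hsx0
          rw [e1]
          exact add_le_add le_rfl e2
      _ = C * sK * (sx * sx) + ε / 4 * (sx * sx) := by ring
      _ = C * sK * x + ε / 4 * x := by rw [hsx1]
  have t3 : c₃ * sx ≤ ε / 8 * K * x := by
    rw [div_lt_iff₀ hsxpos] at htailx
    nlinarith
  have key : K * ‖(dkS f x)‖ ≤ 2 * (C * sK) * x + c₃ * sx + ε / 4 * x + C * x := by
    calc K * ‖(dkS f x)‖
        ≤ C * (sx * Real.sqrt (K * x + 2 * K * P.card))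
          + sx * Real.sqrt (C ^ 2 * K * x + dkOff f P x) + C * x := hmain
      _ ≤ (C * sK * x + c₃ * sx) + (C * sK * x + ε / 4 * x) + C * x :=
          add_le_add (add_le_add t1 t2) le_rfl
      _ = 2 * (C * sK) * x + c₃ * sx + ε / 4 * x + C * x := by ring
  have h4 : ε / 4 * x ≤ ε / 4 * (K * x) := by
    have hx' : (x : ℝ) ≤ K * x := by
      calc (x : ℝ) = 1 * x := (one_mul _).symm
        _ ≤ K * x := mul_le_mul_of_nonneg_right hK1 (le_of_lt hx0)
    exact mul_le_mul_of_nonneg_left hx' (by positivity)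
  have h5 : C * x ≤ ε / 8 * (K * x) := by
    calc C * x ≤ ε / 8 * K * x := mul_le_mul_of_nonneg_right b2 (le_of_lt hx0)
      _ = ε / 8 * (K * x) := by ring
  have b1x : 2 * (C * sK) * x ≤ ε / 4 * (K * x) := by
    have h := mul_le_mul_of_nonneg_right b1 hsK0
    have h' : 2 * C * sK ≤ ε / 4 * K := by
      have e : ε / 4 * sK * sK = ε / 4 * K := by rw [mul_assoc, hsk]
      linarith
    calc 2 * (C * sK) * x = (2 * C * sK) * x := by ring
      _ ≤ (ε / 4 * K) * x := mul_le_mul_of_nonneg_right h' (le_of_lt hx0)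
      _ = ε / 4 * (K * x) := by ring
  have t3' : c₃ * sx ≤ ε / 8 * (K * x) := by
    calc c₃ * sx ≤ ε / 8 * K * x := t3
      _ = ε / 8 * (K * x) := by ring
  have hsum : K * ‖(dkS f x)‖ ≤ 3 / 4 * (ε * (K * x)) := by
    calc K * ‖(dkS f x)‖
        ≤ 2 * (C * sK) * x + c₃ * sx + ε / 4 * x + C * x := key
      _ ≤ ε / 4 * (K * x) + ε / 8 * (K * x) + ε / 4 * (K * x) + ε / 8 * (K * x) :=
          add_le_add (add_le_add (add_le_add b1x t3') h4) h5
      _ = 3 / 4 * (ε * (K * x)) := by ring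
  have hpos : 0 < ε * (K * x) := by positivity
  have hlt : K * ‖(dkS f x)‖ < K * (ε * x) := by
    calc K * ‖(dkS f x)‖ ≤ 3 / 4 * (ε * (K * x)) := hsum
      _ < ε * (K * x) := by linarith
      _ = K * (ε * x) := by ring
  exact (mul_lt_mul_iff_right₀ hKpos).mp hlt
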